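/- If X and Y are finite-dimensional Banach spaces over the field 𝕂 = ℝ or ℂ, then the pair (X, Y) has the Bishop–Phelps–Bollobás–Zizler property (BPBZp). -/

import Mathlib

/-!
The triples `(T, x, y*)` of norm-one operators, vectors and functionals form a compact set `K`
when `X` and `Y` are finite-dimensional, and `(T, x, y*) ↦ |y*(T x)|` is continuous on `K` with
maximum value `1`. By compactness, a point of `K` where this function is close to `1` is close to a
point of `K` where it equals `1`; the maximum metric on the product then bounds all three distances
at once.
-/

/-- The Bishop–Phelps–Bollobás–Zizler property (BPBZp) for a pair of normed spaces. -/
def BPBZp (𝕂 : Type*) [RCLike 𝕂] (X Y : Type*) [NormedAddCommGroup X] [NormedSpace 𝕂 X]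
    [NormedAddCommGroup Y] [NormedSpace 𝕂 Y] : Prop :=
  ∀ ε : ℝ, 0 < ε → ∃ η : ℝ, 0 < η ∧
    ∀ (T : X →L[𝕂] Y) (x₀ : X) (y₀ : Y →L[𝕂] 𝕂),
      ‖T‖ = 1 → ‖x₀‖ = 1 → ‖y₀‖ = 1 → 1 - η < ‖y₀ (T x₀)‖ →
      ∃ (S : X →L[𝕂] Y) (x₁ : X) (y₁ : Y →L[𝕂] 𝕂),
        ‖S‖ = 1 ∧ ‖x₁‖ = 1 ∧ ‖y₁‖ = 1 ∧ ‖y₁ (S x₁)‖ = 1 ∧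
        ‖x₁ - x₀‖ < ε ∧ ‖y₁ - y₀‖ < ε ∧ ‖S - T‖ < ε

open Metric Set

theorem IsCompact.exists_pos_forall_exists_dist_lt_of_sub_lt {α : Type*} [PseudoMetricSpace α]
    {K : Set α} (hK : IsCompact K) {f : α → ℝ} (hf : ContinuousOn f K) (c : ℝ) {ε : ℝ}
    (hε : 0 < ε) : ∃ η > 0, ∀ p ∈ K, c - η < f p → ∃ q ∈ K, c ≤ f q ∧ dist q p < ε := by
  set M := {q ∈ K | c ≤ f q}
  suffices h : ∃ η > 0, ∀ p ∈ K, c - η < f p → p ∈ thickening ε M by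
    obtain ⟨η, hη, hM⟩ := h
    refine ⟨η, hη, fun p hp hfp => ?_⟩
    obtain ⟨q, ⟨hqK, hfq⟩, hpq⟩ := mem_thickening_iff.1 (hM p hp hfp)
    exact ⟨q, hqK, hfq, dist_comm p q ▸ hpq⟩
  -- Away from the `ε`-thickening of `M`, `f` attains a maximum below `c`.
  set L := K \ thickening ε M
  rcases L.eq_empty_or_nonempty with hL | hL
  · refine ⟨1, one_pos, fun p hp _ => ?_⟩
    by_contra hpM
    exact hL.subset ⟨hp, hpM⟩
  obtain ⟨m, ⟨hmK, hmM⟩, hmax⟩ :=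
    (hK.diff isOpen_thickening).exists_isMaxOn hL (hf.mono sdiff_subset)
  have hfm : f m < c := not_le.1 fun h => hmM (self_subset_thickening hε M ⟨hmK, h⟩)
  refine ⟨c - f m, sub_pos.2 hfm, fun p hp hfp => ?_⟩
  by_contra hpM
  have : f p ≤ f m := hmax ⟨hp, hpM⟩
  linarith

theorem bpbzp_of_finiteDimensional_general (𝕂 : Type*) [RCLike 𝕂] (X Y : Type*)
    [NormedAddCommGroup X] [NormedSpace 𝕂 X] [FiniteDimensional 𝕂 X]
    [NormedAddCommGroup Y] [NormedSpace 𝕂 Y] [FiniteDimensional 𝕂 Y] :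
    BPBZp 𝕂 X Y := by
  have : ProperSpace (X →L[𝕂] Y) := FiniteDimensional.proper 𝕂 _
  have : ProperSpace X := FiniteDimensional.proper 𝕂 _
  have : ProperSpace (Y →L[𝕂] 𝕂) := FiniteDimensional.proper 𝕂 _
  intro ε hε
  have hK : IsCompact
      (sphere (0 : X →L[𝕂] Y) 1 ×ˢ sphere (0 : X) 1 ×ˢ sphere (0 : Y →L[𝕂] 𝕂) 1) :=
    (isCompact_sphere 0 1).prod ((isCompact_sphere 0 1).prod (isCompact_sphere 0 1))
  have hf : Continuous fun p : (X →L[𝕂] Y) × X × (Y →L[𝕂] 𝕂) => ‖p.2.2 (p.1 p.2.1)‖ := by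
    fun_prop
  obtain ⟨η, hη, hnear⟩ :=
    hK.exists_pos_forall_exists_dist_lt_of_sub_lt hf.continuousOn 1 hε
  refine ⟨η, hη, fun T x₀ y₀ hT hx₀ hy₀ hval => ?_⟩
  obtain ⟨⟨S, x₁, y₁⟩, ⟨hS, hx₁, hy₁⟩, hSxy, hdist⟩ :=
    hnear (T, x₀, y₀) (by simp [hT, hx₀, hy₀]) hval
  rw [mem_sphere_zero_iff_norm] at hS hx₁ hy₁
  simp only [Prod.dist_eq, max_lt_iff] at hdist
  simp only [dist_eq_norm] at hdist
  have hSxy_le : ‖y₁ (S x₁)‖ ≤ 1 :=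
    (y₁.unit_le_opNorm _ ((S.unit_le_opNorm _ hx₁.le).trans hS.le)).trans hy₁.le
  exact ⟨S, x₁, y₁, hS, hx₁, hy₁, hSxy_le.antisymm hSxy, hdist.2.1, hdist.2.2, hdist.1⟩

/-- If `X` and `Y` are finite-dimensional Banach spaces, then `(X, Y)` has the BPBZp. -/
theorem bpbzp_of_finiteDimensional (𝕂 : Type*) [RCLike 𝕂] (X Y : Type*)
    [NormedAddCommGroup X] [NormedSpace 𝕂 X] [CompleteSpace X] [FiniteDimensional 𝕂 X]
    [NormedAddCommGroup Y] [NormedSpace 𝕂 Y] [CompleteSpace Y] [FiniteDimensional 𝕂 Y] :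
    BPBZp 𝕂 X Y :=
  bpbzp_of_finiteDimensional_general 𝕂 X Y
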